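/- Let κ be a cardinal with a distinguished index r ∈ κ such that α_r = ω₁ and 2 ≤ α_i < ω₁ for all i ≠ r. Then the least ordinal β with β → (top α_i)^1_{i∈κ} is max{ω₁, κ⁺}. In particular, for every coloring c : κ⁺ → κ (κ infinite), either c⁻¹({r}) contains a subspace homeomorphic to ω₁, or c⁻¹({i}) contains a subspace homeomorphic to α_i for some i ≠ r. -/

import Mathlib

open Set Ordinal
open scoped Cardinal

noncomputable section

/-- Derived set (non-isolated points) of a set of ordinals, as a subspace. -/
def deriv' (s : Set Ordinal.{0}) : Set Ordinal.{0} := {x ∈ s | x ∈ closure (s \ {x})}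

/-- Iterated Cantor–Bendixson derivative. -/
def iterDeriv (s : Set Ordinal.{0}) (o : Ordinal.{0}) : Set Ordinal.{0} :=
  Ordinal.limitRecOn o s (fun _ ih => deriv' ih) (fun o _ ih => ⋂ (p : Ordinal.{0}) (h : p < o), ih p h)

/-- `s` contains a homeomorphic copy of the ordinal `α` (with its order topology). -/
def HomeoCopy (α : Ordinal.{0}) (s : Set Ordinal.{0}) : Prop :=
  ∃ t : Set Ordinal, t ⊆ s ∧ Nonempty ((Iio α : Set Ordinal.{0}) ≃ₜ t)

/-- Two ordinals are biembeddable: each is homeomorphic to a subspace of the other. -/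
def Biembed (α β : Ordinal.{0}) : Prop := HomeoCopy α (Iio β) ∧ HomeoCopy β (Iio α)

/-- Two sets of ordinals are order-homeomorphic: there is an order-preserving homeomorphism. -/
def OrderHomeo (X Y : Set Ordinal.{0}) : Prop :=
  ∃ e : X ≃ₜ Y, ∀ a b : X, a ≤ b ↔ e a ≤ e b

/-- An ordinal is order-reinforcing. -/
def OrderReinforcing (α : Ordinal.{0}) : Prop :=
  ∀ X : Set Ordinal, Nonempty ((Iio α : Set Ordinal.{0}) ≃ₜ X) → ∃ Y ⊆ X, OrderHomeo (Iio α) Y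

/-- The Cantor–Bendixson rank of an ordinal: the least exponent in its Cantor normal form. -/
def CB (x : Ordinal.{0}) : Ordinal := if x = 0 then 0 else sSup {γ | (ω : Ordinal.{0}) ^ γ ∣ x}

universe u

noncomputable def Ordinal.nadd (a b : Ordinal.{u}) : Ordinal.{u} :=
  max (blsub.{u, u} a fun a' _ => nadd a' b) (blsub.{u, u} b fun b' _ => nadd a b')
termination_by (a, b)

infixl:65 " ♯ " => Ordinal.nadd

/-- The natural (Hessenberg) sum of a finite family of ordinals. -/
def natSumFam {k : ℕ} (α : Fin k → Ordinal.{0}) : Ordinal := (List.ofFn α).foldr (· ♯ ·) 0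

/-- The Milner–Rado sum of a finite family of ordinals. -/
def mrSumFam {k : ℕ} (α : Fin k → Ordinal.{0}) : Ordinal :=
  sInf {δ | ∀ β : Fin k → Ordinal, (∀ i, β i < α i) → δ ≠ natSumFam β}

/-- The topological pigeonhole relation `β → (top α i)¹` for finitely many colours. -/
def TopPH {k : ℕ} (β : Ordinal.{0}) (α : Fin k → Ordinal.{0}) : Prop :=
  ∀ c : Ordinal → Fin k, ∃ i, HomeoCopy (α i) (Iio β ∩ c ⁻¹' {i})

/-- The topological pigeonhole relation with an arbitrary index type of colours. -/
def TopPHFam {ι : Type*} (β : Ordinal.{0}) (α : ι → Ordinal.{0}) : Prop :=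
  ∀ c : Ordinal → ι, ∃ i, HomeoCopy (α i) (Iio β ∩ c ⁻¹' {i})

/-- `ω̄[γ, m]`: `ω ^ γ * m + 1` if `γ > 0`, and `m` if `γ = 0`. -/
def obar (γ : Ordinal.{0}) (m : ℕ) : Ordinal := if γ = 0 then (m : Ordinal.{0}) else ω ^ γ * m + 1

/-- `C` is closed and unbounded in `o`. -/
def IsClubIn (C : Set Ordinal.{0}) (o : Ordinal.{0}) : Prop :=
  C ⊆ Iio o ∧ (∀ x < o, ∃ y ∈ C, x ≤ y) ∧
    ∀ x < o, x ≠ 0 → (∀ y < x, ∃ z ∈ C, y < z ∧ z < x) → x ∈ C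

/-- `S` is stationary in `o`: it meets every club subset of `o`. -/
def StationaryIn (S : Set Ordinal.{0}) (o : Ordinal.{0}) : Prop :=
  ∀ C, IsClubIn C o → (S ∩ C).Nonempty


/-!
Put `c = max ℵ₁ κ⁺`, a regular uncountable cardinal, and fix a colouring of `c`. Let `S` be the set
of points of countable cofinality whose colour is not `r`.

If `S` is stationary then, as there are fewer than `c` colours, some `S ∩ col⁻¹ {i}` with `i ≠ r`
is stationary, and by Friedman's theorem a stationary set of points of countable cofinality
contains a closed copy of every countable successor ordinal, in particular of `α i + 1`. Friedman's
theorem goes by induction on `γ < ω₁`; at a limit `γ`, cut `γ` into `ω` successor blocks and pick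
`δ ∈ S` closed under choosing copies of the blocks above a given point: stacking such copies along
a cofinal `ω`-sequence of `δ` gives a closed copy of `γ + 1` with top `δ`.

Otherwise some club `C` misses `S`. The continuous increasing enumeration of `C` sends the limit
ordinals below `ω₁`, enumerated by `ξ ↦ ω * (1 + ξ)`, to points of `C` of countable cofinality,
which all have colour `r`: a copy of `ω₁`.

Minimality: a constant colouring forces a copy of `ω₁`, so `ω₁ ≤ β`, and if `|β| ≤ κ` an injective
colouring has no colour class with two points.
-/

open Order Topology

theorem StrictMono.isEmbedding_of_continuous {α β : Type*} [LinearOrder α] [TopologicalSpace α]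
    [OrderTopology α] [LinearOrder β] [TopologicalSpace β] [OrderTopology β] {f : α → β}
    (hf : StrictMono f) (hc : Continuous f) : IsEmbedding f where
  eq_induced := le_antisymm (continuous_iff_le_induced.1 hc) <|
    (induced_topology_le_preorder hf.lt_iff_lt).trans_eq
      OrderTopology.topology_eq_generate_intervals.symm
  injective := hf.injective

theorem HomeoCopy.mono {a : Ordinal.{0}} {s t : Set Ordinal.{0}} (h : HomeoCopy a s)
    (hst : s ⊆ t) : HomeoCopy a t :=
  let ⟨u, hus, he⟩ := h
  ⟨u, hus.trans hst, he⟩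

theorem HomeoCopy.nontrivial {a : Ordinal.{0}} {s : Set Ordinal.{0}} (h : HomeoCopy a s)
    (ha : 2 ≤ a) : s.Nontrivial := by
  obtain ⟨t, hts, ⟨e⟩⟩ := h
  have h1 : (1 : Ordinal.{0}) < a := one_lt_two.trans_le ha
  refine ⟨_, hts (e ⟨0, zero_lt_one.trans h1⟩).2, _, hts (e ⟨1, h1⟩).2, fun h01 => ?_⟩
  exact zero_ne_one (congrArg Subtype.val (e.injective (Subtype.ext h01)))

theorem HomeoCopy.card_le {a : Ordinal.{0}} {s : Set Ordinal.{0}} (h : HomeoCopy a s) :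
    Cardinal.lift.{1} a.card ≤ #s := by
  obtain ⟨t, hts, ⟨e⟩⟩ := h
  rw [← Cardinal.mk_Iio_ordinal, Cardinal.mk_congr e.toEquiv]
  exact Cardinal.mk_le_mk_of_subset hts

structure IsNormalOn (f : Ordinal.{u} → Ordinal.{u}) (a : Ordinal.{u}) : Prop where
  strictMonoOn : StrictMonoOn f (Iio a)
  isLUB_image_Iio : ∀ y < a, IsSuccLimit y → IsLUB (f '' Iio y) (f y)

namespace IsNormalOn

variable {f g h : Ordinal.{u} → Ordinal.{u}} {a b : Ordinal.{u}}

theorem mono (hf : IsNormalOn f a) (hba : b ≤ a) : IsNormalOn f b :=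
  ⟨hf.strictMonoOn.mono (Iio_subset_Iio hba),
    fun y hy hlim => hf.isLUB_image_Iio y (hy.trans_le hba) hlim⟩

theorem le_apply_of_lt_add_one (hf : IsNormalOn f (a + 1)) {x : Ordinal.{u}} (hx : x < a + 1) :
    f x ≤ f a :=
  (lt_add_one_iff.1 hx).eq_or_lt.elim (fun h => h ▸ le_rfl)
    fun h => (hf.strictMonoOn hx (mem_Iio.2 (lt_add_one a)) h).le

theorem isNormal_domRestrict (hf : IsNormalOn f a) : IsNormal ((Iio a).domRestrict f) := by
  refine ⟨hf.strictMonoOn.domRestrict, fun {y} hy u hu => ?_⟩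
  rw [← (principalSegIio a).isSuccLimit_apply_iff] at hy
  refine (hf.isLUB_image_Iio y y.2 hy).2 ?_
  rintro _ ⟨z, hz, rfl⟩
  exact hu ⟨⟨z, mem_Iio.2 (hz.trans y.2)⟩, hz, rfl⟩

theorem homeoCopy {s : Set Ordinal.{0}} {f : Ordinal.{0} → Ordinal.{0}} {a : Ordinal.{0}}
    (hf : IsNormalOn f a) (hs : MapsTo f (Iio a) s) : HomeoCopy a s := by
  have hn := hf.isNormal_domRestrict
  exact ⟨_, range_subset_iff.2 fun y => hs y.2,
    ⟨(hn.strictMono.isEmbedding_of_continuous hn.continuous).toHomeomorph⟩⟩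

theorem comp (hg : IsNormalOn g b) (hh : IsNormal h) (hab : MapsTo h (Iio a) (Iio b)) :
    IsNormalOn (g ∘ h) a := by
  refine ⟨fun x hx y hy hxy => hg.strictMonoOn (hab hx) (hab hy) (hh.strictMono hxy),
    fun y hy hlim => ⟨?_, fun u hu => ?_⟩⟩
  · rintro _ ⟨x, hx, rfl⟩
    exact (hg.strictMonoOn (hab (hx.trans hy)) (hab hy) (hh.strictMono hx)).le
  · refine (hg.isLUB_image_Iio (h y) (hab hy) (hh.map_isSuccLimit hlim)).2 ?_
    rintro _ ⟨w, hw, rfl⟩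
    obtain ⟨v, hv, hwv⟩ := (hh.lt_iff_exists_lt hlim).1 hw
    exact (hg.strictMonoOn (mem_Iio.2 (hw.trans (hab hy))) (hab (hv.trans hy)) hwv).le.trans
      (hu ⟨v, hv, rfl⟩)

theorem cof_apply (hf : IsNormalOn f a) {y : Ordinal.{u}} (hy : y < a) (hlim : IsSuccLimit y) :
    (f y).cof = y.cof := by
  have : Nonempty (Iio y) := ⟨⟨0, hlim.bot_lt⟩⟩
  have hsup : ⨆ x : Iio y, f x = f y :=
    (image_eq_range f (Iio y) ▸ hf.isLUB_image_Iio y hy hlim).ciSup_eq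
  rw [← hsup]
  exact cof_iSup_Iio (fun x z hxz => hf.strictMonoOn (x.2.trans hy) (z.2.trans hy) hxz)
    hlim.isSuccPrelimit

end IsNormalOn

theorem exists_seq_of_cof_eq_aleph0 {o : Ordinal.{u}} (ho : o.cof = ℵ₀) :
    ∃ b : ℕ → Ordinal.{u}, (∀ n, b n < o) ∧ ∀ y < o, ∃ n, y ≤ b n := by
  obtain ⟨f, hf⟩ := exists_isFundamentalSeq (show o.cof.ord = ω by rw [ho, Cardinal.ord_aleph0])
  refine ⟨fun n => f ⟨n, natCast_lt_omega0 n⟩, fun n => (f _).2, fun y hy => ?_⟩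
  obtain ⟨_, ⟨⟨i, hi⟩, rfl⟩, hyi⟩ := hf.isCofinal_range ⟨y, hy⟩
  obtain ⟨n, rfl⟩ := lt_omega0.1 hi
  exact ⟨n, hyi⟩

theorem omega0_mul_one_add_lt_omega1 {ξ : Ordinal.{u}} (hξ : ξ < ω₁) : ω * (1 + ξ) < ω₁ := by
  have h := Cardinal.aleph0_le_aleph 1
  rw [← Cardinal.ord_aleph] at hξ ⊢
  exact isPrincipal_mul_ord h (Cardinal.ord_aleph 1 ▸ omega0_lt_omega_one)
    (isPrincipal_add_ord h (Cardinal.ord_aleph 1 ▸ one_lt_omega0.trans omega0_lt_omega_one) hξ)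

section Club

variable {c : Cardinal.{0}}

theorem Cardinal.IsRegular.iSup_Iio_lt_ord (hc : c.IsRegular) {v : Ordinal.{0}} (hv : v < c.ord)
    {f : Iio v → Ordinal.{0}} (hf : ∀ i, f i < c.ord) : ⨆ i, f i < c.ord := by
  apply Ordinal.lift_iSup_lt_of_lt_cof _ hf
  rwa [← lift_cof, hc.cof_ord, Cardinal.mk_Iio_ordinal, Cardinal.lift_lift, Cardinal.lift_lt,
    ← Cardinal.lt_ord]

theorem isClubIn_Ioo (hc : c.IsRegular) {x : Ordinal.{0}} (hx : x < c.ord) :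
    IsClubIn (Ioo x c.ord) c.ord := by
  have hlim := Cardinal.isSuccLimit_ord hc.aleph0_le
  refine ⟨fun y hy => hy.2, fun y hy => ⟨max x y + 1, ⟨?_, ?_⟩, ?_⟩, fun w hw hw0 hacc => ⟨?_, hw⟩⟩
  · exact (le_max_left x y).trans_lt (lt_add_one _)
  · exact hlim.add_one_lt (max_lt hx hy)
  · exact (le_max_right x y).trans (lt_add_one _).le
  · obtain ⟨z, hz, -, hzw⟩ := hacc 0 (pos_iff_ne_zero.2 hw0)
    exact hz.1.trans hzw

theorem isClubIn_closurePoints (hc : c.IsRegular) (hc₁ : ℵ₀ < c) {F : Ordinal.{0} → Ordinal.{0}}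
    (hF : MapsTo F (Iio c.ord) (Iio c.ord)) :
    IsClubIn {x | x < c.ord ∧ ∀ ξ < x, F ξ < x} c.ord := by
  have hlim := Cardinal.isSuccLimit_ord hc.aleph0_le
  refine ⟨fun x hx => hx.1, fun x hx => ?_, fun w hw _ hacc => ⟨hw, fun ξ hξ => ?_⟩⟩
  · set G : Ordinal.{0} → Ordinal.{0} := fun v => ⨆ ξ : Iio v, (F ξ + 1)
    have hG : ∀ v < c.ord, G v < c.ord := fun v hv =>
      hc.iSup_Iio_lt_ord hv fun ξ => hlim.add_one_lt (hF (ξ.2.trans hv))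
    refine ⟨nfp G x, ⟨nfp_lt_ord (by rwa [hc.cof_ord]) hG hx, fun ξ hξ => ?_⟩, le_nfp G x⟩
    obtain ⟨n, hn⟩ := lt_nfp_iff.1 hξ
    calc F ξ < F ξ + 1 := lt_add_one _
      _ ≤ G (G^[n] x) := Ordinal.le_iSup (fun ζ : Iio (G^[n] x) => F ζ + 1) ⟨ξ, hn⟩
      _ = G^[n + 1] x := (Function.iterate_succ_apply' G n x).symm
      _ ≤ nfp G x := iterate_le_nfp G x (n + 1)
  · obtain ⟨z, hz, hξz, hzw⟩ := hacc ξ hξ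
    exact (hz.2 ξ hξz).trans hzw

theorem IsClubIn.iInter (hc : c.IsRegular) (hc₁ : ℵ₀ < c) {ι : Type} [Nonempty ι]
    (hι : #ι < c) {C : ι → Set Ordinal.{0}} (hC : ∀ i, IsClubIn (C i) c.ord) :
    IsClubIn (⋂ i, C i) c.ord := by
  have hlim := Cardinal.isSuccLimit_ord hc.aleph0_le
  refine ⟨(iInter_subset _ (Classical.arbitrary ι)).trans (hC _).1, fun x hx => ?_,
    fun w hw hw0 hacc => mem_iInter.2 fun i => (hC i).2.2 w hw hw0 fun v hv => ?_⟩
  · have hnext : ∀ i, ∀ v < c.ord, ∃ z ∈ C i, v < z := fun i v hv =>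
      ((hC i).2.1 (v + 1) (hlim.add_one_lt hv)).imp fun z hz => ⟨hz.1, add_one_le_iff.1 hz.2⟩
    choose! next hnextC hnextlt using hnext
    have hF : MapsTo (fun v => ⨆ i, next i v) (Iio c.ord) (Iio c.ord) := fun v hv =>
      Ordinal.iSup_lt_of_lt_cof (by rwa [hc.cof_ord]) fun i => (hC i).1 (hnextC i v hv)
    -- a closure point of `v ↦ sup_i next i v` is a limit of every `C i`
    obtain ⟨y, ⟨hy, hyF⟩, hxy⟩ :=
      (isClubIn_closurePoints hc hc₁ hF).2.1 (x + 1) (hlim.add_one_lt hx)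
    refine ⟨y, mem_iInter.2 fun i => (hC i).2.2 y hy (lt_of_lt_of_le (lt_add_one x) hxy).ne_bot
      fun v hv => ⟨next i v, hnextC i v (hv.trans hy), hnextlt i v (hv.trans hy), ?_⟩,
      (lt_add_one x).le.trans hxy⟩
    exact (Ordinal.le_iSup (fun j => next j v) i).trans_lt (hyF v hv)
  · obtain ⟨z, hz, hvz, hzw⟩ := hacc v hv
    exact ⟨z, mem_iInter.1 hz i, hvz, hzw⟩

theorem IsClubIn.inter (hc : c.IsRegular) (hc₁ : ℵ₀ < c) {C D : Set Ordinal.{0}}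
    (hC : IsClubIn C c.ord) (hD : IsClubIn D c.ord) : IsClubIn (C ∩ D) c.ord := by
  rw [inter_eq_iInter]
  exact IsClubIn.iInter hc hc₁ (Cardinal.mk_lt_aleph0.trans hc₁) (Bool.forall_bool.2 ⟨hD, hC⟩)

theorem StationaryIn.inter (hc : c.IsRegular) (hc₁ : ℵ₀ < c) {S C : Set Ordinal.{0}}
    (hS : StationaryIn S c.ord) (hC : IsClubIn C c.ord) : StationaryIn (S ∩ C) c.ord := by
  intro D hD
  rw [inter_assoc]
  exact hS _ (hC.inter hc hc₁ hD)

theorem StationaryIn.exists_lt (hc : c.IsRegular) {S : Set Ordinal.{0}}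
    (hS : StationaryIn S c.ord) : ∃ x ∈ S, x < c.ord :=
  let ⟨x, hxS, _, hx⟩ := hS _ (isClubIn_Ioo hc (Cardinal.ord_pos.2 hc.pos))
  ⟨x, hxS, hx⟩

theorem StationaryIn.exists_inter_preimage (hc : c.IsRegular) (hc₁ : ℵ₀ < c) {ι : Type}
    (hι : #ι < c) {S : Set Ordinal.{0}} (hS : StationaryIn S c.ord) (col : Ordinal.{0} → ι) :
    ∃ i, StationaryIn (S ∩ col ⁻¹' {i}) c.ord := by
  by_contra! h
  simp only [StationaryIn, not_forall, not_nonempty_iff_eq_empty] at h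
  choose C hC hSC using h
  obtain ⟨x, -⟩ := hS.exists_lt hc
  have : Nonempty ι := ⟨col x⟩
  obtain ⟨y, hyS, hyC⟩ := hS _ (IsClubIn.iInter hc hc₁ hι hC)
  exact (hSC (col y)).subset ⟨⟨hyS, rfl⟩, mem_iInter.1 hyC _⟩

def clubEnum (C : Set Ordinal.{0}) (o : Ordinal.{0}) : Ordinal.{0} :=
  limitRecOn o (sInf C) (fun _ x => sInf (C ∩ Ioi x)) fun o _ x => ⨆ a : Iio o, x a a.2

theorem clubEnum_zero (C : Set Ordinal.{0}) : clubEnum C 0 = sInf C :=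
  limitRecOn_zero _ _ _

theorem clubEnum_add_one (C : Set Ordinal.{0}) (o : Ordinal.{0}) :
    clubEnum C (o + 1) = sInf (C ∩ Ioi (clubEnum C o)) :=
  limitRecOn_add_one _ _ _ _

theorem clubEnum_of_isSuccLimit (C : Set Ordinal.{0}) {o : Ordinal.{0}} (ho : IsSuccLimit o) :
    clubEnum C o = ⨆ a : Iio o, clubEnum C a :=
  limitRecOn_limit _ _ _ _ ho

theorem IsClubIn.clubEnum_mem_and_lt (hc : c.IsRegular) {C : Set Ordinal.{0}}
    (hC : IsClubIn C c.ord) {ξ : Ordinal.{0}} (hξ : ξ < c.ord) :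
    clubEnum C ξ ∈ C ∧ ∀ η < ξ, clubEnum C η < clubEnum C ξ := by
  have hlim := Cardinal.isSuccLimit_ord hc.aleph0_le
  have hnext : ∀ v < c.ord, sInf (C ∩ Ioi v) ∈ C ∩ Ioi v := fun v hv => csInf_mem <|
    (hC.2.1 (v + 1) (hlim.add_one_lt hv)).imp fun z hz => ⟨hz.1, add_one_le_iff.1 hz.2⟩
  induction ξ using Ordinal.limitRecOn with
  | zero =>
    rw [clubEnum_zero]
    exact ⟨csInf_mem ⟨_, (hnext 0 hlim.bot_lt).1⟩, fun η hη => (not_lt_zero hη).elim⟩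
  | add_one o IH =>
    have hIH := IH ((lt_add_one o).trans hξ)
    have hmem : clubEnum C (o + 1) ∈ C ∩ Ioi (clubEnum C o) := by
      rw [clubEnum_add_one]
      exact hnext _ (hC.1 hIH.1)
    refine ⟨hmem.1, fun η hη => ?_⟩
    rcases (lt_add_one_iff.1 hη).lt_or_eq with hη | rfl
    · exact (hIH.2 η hη).trans hmem.2
    · exact hmem.2
  | limit o ho IH =>
    have hlt : ∀ η < o, clubEnum C η < clubEnum C o := fun η hη =>
      calc clubEnum C η < clubEnum C (η + 1) :=
            (IH (η + 1) (ho.add_one_lt hη) ((ho.add_one_lt hη).trans hξ)).2 η (lt_add_one η)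
        _ ≤ clubEnum C o := clubEnum_of_isSuccLimit C ho ▸
            Ordinal.le_iSup (fun a : Iio o => clubEnum C a) ⟨η + 1, ho.add_one_lt hη⟩
    refine ⟨hC.2.2 _ ?_ (hlt 0 ho.bot_lt).ne_bot fun y hy => ?_, hlt⟩
    · rw [clubEnum_of_isSuccLimit C ho]
      exact hc.iSup_Iio_lt_ord hξ fun a => hC.1 (IH a a.2 (a.2.trans hξ)).1
    · rw [clubEnum_of_isSuccLimit C ho, Ordinal.lt_iSup_iff] at hy
      obtain ⟨a, ha⟩ := hy
      exact ⟨clubEnum C a, (IH a a.2 (a.2.trans hξ)).1, ha, hlt a a.2⟩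

theorem IsClubIn.isNormalOn_clubEnum (hc : c.IsRegular) {C : Set Ordinal.{0}}
    (hC : IsClubIn C c.ord) : IsNormalOn (clubEnum C) c.ord := by
  refine ⟨fun x _ y hy hxy => (hC.clubEnum_mem_and_lt hc hy).2 x hxy, fun y _ hylim => ?_⟩
  have : Nonempty (Iio y) := ⟨⟨0, hylim.bot_lt⟩⟩
  rw [clubEnum_of_isSuccLimit C hylim, image_eq_range]
  exact isLUB_ciSup bddAbove_of_small

theorem IsClubIn.homeoCopy_omega1 (hc : c.IsRegular) (hc₁ : ℵ₀ < c) {C : Set Ordinal.{0}}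
    (hC : IsClubIn C c.ord) : HomeoCopy ω₁ (C ∩ {x | x.cof = ℵ₀}) := by
  have hω₁ : ω₁ ≤ c.ord :=
    Cardinal.ord_aleph 1 ▸ Cardinal.ord_le_ord.2 (Cardinal.aleph_one_le_iff.2 hc₁)
  -- `ξ ↦ ω * (1 + ξ)` enumerates the limit ordinals
  have hh : IsNormal fun ξ : Ordinal.{0} => ω * (1 + ξ) :=
    (isNormal_mul_right omega0_pos).comp (isNormal_add_right 1)
  have hlim : ∀ ξ : Ordinal.{0}, IsSuccLimit (ω * (1 + ξ)) := fun ξ =>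
    isSuccLimit_mul_left isSuccLimit_omega0 (lt_of_lt_of_le zero_lt_one le_self_add)
  have hl : ∀ ξ < ω₁, ω * (1 + ξ) < c.ord := fun ξ hξ =>
    (omega0_mul_one_add_lt_omega1 hξ).trans_le hω₁
  refine ((hC.isNormalOn_clubEnum hc).comp hh hl).homeoCopy fun ξ hξ =>
    ⟨(hC.clubEnum_mem_and_lt hc (hl ξ hξ)).1, ?_⟩
  show (clubEnum C _).cof = ℵ₀
  rw [(hC.isNormalOn_clubEnum hc).cof_apply (hl ξ hξ) (hlim ξ)]
  exact cof_eq_aleph0_of_isSuccLimit (hlim ξ) (omega0_mul_one_add_lt_omega1 hξ)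

end Club

def IsClosedCopyTop (γ : Ordinal.{u}) (S : Set Ordinal.{u}) (δ : Ordinal.{u}) : Prop :=
  ∃ f, IsNormalOn f (γ + 1) ∧ MapsTo f (Iio (γ + 1)) S ∧ f γ = δ

section ClosedCopy

variable {γ δ : Ordinal.{u}} {S : Set Ordinal.{u}}

theorem isClosedCopyTop_zero (hδ : δ ∈ S) : IsClosedCopyTop 0 S δ := by
  refine ⟨fun _ => δ, ⟨fun x hx y hy hxy => ?_, fun y hy hlim => ?_⟩, fun _ _ => hδ, rfl⟩
  · rw [zero_add, mem_Iio, Order.lt_one_iff] at hx hy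
    subst hx hy
    exact (lt_irrefl _ hxy).elim
  · rw [zero_add, Order.lt_one_iff] at hy
    subst hy
    exact (not_isSuccLimit_zero hlim).elim

theorem IsClosedCopyTop.add_one {δ₀ : Ordinal.{u}} (h : IsClosedCopyTop γ S δ₀) (hδ₀ : δ₀ < δ)
    (hδ : δ ∈ S) : IsClosedCopyTop (γ + 1) S δ := by
  obtain ⟨f, hf, hfS, rfl⟩ := h
  have hupd : ∀ x < γ + 1, Function.update f (γ + 1) δ x = f x := fun x hx =>
    Function.update_of_ne hx.ne _ _
  refine ⟨Function.update f (γ + 1) δ, ⟨fun x hx y hy hxy => ?_, fun y hy hlim => ?_⟩,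
    fun y hy => ?_, Function.update_self _ _ _⟩
  · rcases (lt_add_one_iff.1 (mem_Iio.1 hy)).eq_or_lt with rfl | hy
    · rw [hupd x hxy, Function.update_self]
      exact (hf.le_apply_of_lt_add_one hxy).trans_lt hδ₀
    · rw [hupd x (hxy.trans hy), hupd y hy]
      exact hf.strictMonoOn (hxy.trans hy) hy hxy
  · have hy' : y < γ + 1 :=
      (lt_add_one_iff.1 hy).lt_of_ne fun h => not_isSuccLimit_add_one γ (h ▸ hlim)
    rw [hupd y hy', image_congr (s := Iio y) fun x hx => hupd x (lt_trans hx hy')]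
    exact hf.isLUB_image_Iio y hy' hlim
  · rcases (lt_add_one_iff.1 (mem_Iio.1 hy)).eq_or_lt with rfl | hy
    · rw [Function.update_self]
      exact hδ
    · rw [hupd y hy]
      exact hfS hy

end ClosedCopy

structure IsBlockStarts (A η : ℕ → Ordinal.{u}) : Prop where
  zero : A 0 = 0
  add_add_one : ∀ n, A n + (η n + 1) = A (n + 1)

-- `blockConcat A g δ (A n + z) = g n z` for `z ≤ η n`
open Classical in
def blockConcat (A : ℕ → Ordinal.{u}) (g : ℕ → Ordinal.{u} → Ordinal.{u}) (δ y : Ordinal.{u}) :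
    Ordinal.{u} :=
  if h : ∃ n, A n ≤ y ∧ y < A (n + 1) then g h.choose (y - A h.choose) else δ

section BlockConcat

variable {A η : ℕ → Ordinal.{u}} {g : ℕ → Ordinal.{u} → Ordinal.{u}} {γ δ : Ordinal.{u}}

theorem blockConcat_of_le (hγ : IsLUB (range A) γ) {y : Ordinal.{u}} (hy : γ ≤ y) :
    blockConcat A g δ y = δ := by
  rw [blockConcat, dif_neg]
  rintro ⟨n, -, hn⟩
  exact (hγ.1 ⟨n + 1, rfl⟩ |>.trans hy).not_gt hn

theorem top_lt_of_top_lt_succ (hsep : ∀ n, ∀ z < η (n + 1) + 1, g n (η n) < g (n + 1) z) {m n : ℕ}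
    (hmn : m < n) : ∀ z < η n + 1, g m (η m) < g n z := by
  induction n, hmn using Nat.le_induction with
  | base => exact hsep m
  | succ n hmn ih => exact fun z hz => (ih (η n) (lt_add_one _)).trans (hsep n z hz)

namespace IsBlockStarts

theorem strictMono (hA : IsBlockStarts A η) : StrictMono A :=
  strictMono_nat_of_lt_succ fun n =>
    hA.add_add_one n ▸ lt_add_of_pos_right _ (lt_add_one _).bot_lt

theorem not_isSuccLimit (hA : IsBlockStarts A η) (n : ℕ) : ¬ IsSuccLimit (A n) := by
  cases n with
  | zero => exact hA.zero ▸ not_isSuccLimit_zero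
  | succ n =>
    rw [← hA.add_add_one n, ← add_assoc]
    exact not_isSuccLimit_add_one _

theorem exists_eq_add_of_lt (hA : IsBlockStarts A η) (hγ : IsLUB (range A) γ) {y : Ordinal.{u}}
    (hy : y < γ) : ∃ n, ∃ z < η n + 1, y = A n + z := by
  obtain ⟨_, ⟨n, rfl⟩, hn⟩ := (lt_isLUB_iff hγ).1 hy
  induction n with
  | zero => exact absurd (hA.zero ▸ hn) not_lt_zero
  | succ n ih =>
    by_cases h : y < A n
    · exact ih h
    · refine ⟨n, y - A n, ?_, (Ordinal.add_sub_cancel_of_le (not_lt.1 h)).symm⟩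
      rwa [Ordinal.sub_lt_of_le (not_lt.1 h), hA.add_add_one]

theorem blockConcat_add (hA : IsBlockStarts A η) {n : ℕ} {z : Ordinal.{u}} (hz : z < η n + 1) :
    blockConcat A g δ (A n + z) = g n z := by
  have hmem : A n ≤ A n + z ∧ A n + z < A (n + 1) :=
    ⟨le_self_add, hA.add_add_one n ▸ add_lt_add_right hz _⟩
  have hex : ∃ m, A m ≤ A n + z ∧ A n + z < A (m + 1) := ⟨n, hmem⟩
  have hm : hex.choose = n := by
    obtain ⟨h₁, h₂⟩ := hex.choose_spec
    by_contra hne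
    rcases lt_or_gt_of_ne hne with h | h
    · exact h₂.not_ge (hA.strictMono.monotone (Nat.succ_le_of_lt h) |>.trans hmem.1)
    · exact hmem.2.not_ge (hA.strictMono.monotone (Nat.succ_le_of_lt h) |>.trans h₁)
  rw [blockConcat, dif_pos hex, hm, Ordinal.add_sub_cancel]

variable {S : Set Ordinal.{u}}

theorem strictMonoOn_blockConcat (hA : IsBlockStarts A η) (hγ : IsLUB (range A) γ)
    (hg : ∀ n, IsNormalOn (g n) (η n + 1))
    (hsep : ∀ n, ∀ z < η (n + 1) + 1, g n (η n) < g (n + 1) z)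
    (hδ : ∀ n, g n (η n) ≤ δ) : StrictMonoOn (blockConcat A g δ) (Iio (γ + 1)) := by
  intro x hx y hy hxy
  obtain ⟨m, z, hz, rfl⟩ := hA.exists_eq_add_of_lt hγ (hxy.trans_le (lt_add_one_iff.1 hy))
  rw [hA.blockConcat_add hz]
  rcases (lt_add_one_iff.1 (mem_Iio.1 hy)).eq_or_lt with rfl | hy
  · rw [blockConcat_of_le hγ le_rfl]
    exact (hg m).le_apply_of_lt_add_one hz |>.trans_lt <|
      (top_lt_of_top_lt_succ hsep (lt_add_one m) _ (lt_add_one _)).trans_le (hδ (m + 1))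
  obtain ⟨n, w, hw, rfl⟩ := hA.exists_eq_add_of_lt hγ hy
  rw [hA.blockConcat_add hw]
  rcases lt_trichotomy m n with hmn | rfl | hnm
  · exact ((hg m).le_apply_of_lt_add_one hz).trans_lt (top_lt_of_top_lt_succ hsep hmn w hw)
  · exact (hg m).strictMonoOn hz hw ((add_lt_add_iff_left _).1 hxy)
  · refine absurd hxy (not_lt.2 ?_)
    calc A n + w ≤ A (n + 1) := (hA.add_add_one n ▸ add_lt_add_right hw _).le
      _ ≤ A m := hA.strictMono.monotone hnm
      _ ≤ A m + z := le_self_add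

theorem isClosedCopyTop_blockConcat (hA : IsBlockStarts A η) (hγ : IsLUB (range A) γ)
    (hg : ∀ n, IsNormalOn (g n) (η n + 1)) (hgS : ∀ n, MapsTo (g n) (Iio (η n + 1)) S)
    (hsep : ∀ n, ∀ z < η (n + 1) + 1, g n (η n) < g (n + 1) z)
    (hδ : IsLUB (range fun n => g n (η n)) δ) (hδS : δ ∈ S) :
    IsClosedCopyTop γ S δ := by
  have hF : ∀ {n z}, z < η n + 1 → blockConcat A g δ (A n + z) = g n z := hA.blockConcat_add
  have hFtop : blockConcat A g δ γ = δ := blockConcat_of_le hγ le_rfl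
  have hmono := hA.strictMonoOn_blockConcat hγ hg hsep fun n => hδ.1 ⟨n, rfl⟩
  refine ⟨blockConcat A g δ, ⟨hmono, fun y hy hlim => ⟨?_, fun u hu => ?_⟩⟩, fun y hy => ?_,
    hFtop⟩
  · rintro _ ⟨x, hx, rfl⟩
    exact (hmono (hx.trans hy) hy hx).le
  · rcases (lt_add_one_iff.1 hy).eq_or_lt with rfl | hy
    · rw [hFtop]
      refine hδ.2 ?_
      rintro _ ⟨n, rfl⟩
      have hlt : A n + η n < y :=
        calc A n + η n < A n + (η n + 1) := add_lt_add_right (lt_add_one _) _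
          _ = A (n + 1) := hA.add_add_one n
          _ ≤ y := hγ.1 ⟨n + 1, rfl⟩
      exact (hF (lt_add_one (η n))).symm.trans_le (hu ⟨_, hlt, rfl⟩)
    obtain ⟨n, z, hz, rfl⟩ := hA.exists_eq_add_of_lt hγ hy
    have hzlim : IsSuccLimit z := (isSuccLimit_add_iff.1 hlim).resolve_right
      fun h => hA.not_isSuccLimit n h.2
    rw [hF hz]
    refine ((hg n).isLUB_image_Iio z hz hzlim).2 ?_
    rintro _ ⟨w, hw, rfl⟩
    exact (hF (hw.trans hz)).symm.trans_le (hu ⟨_, mem_Iio.2 (add_lt_add_right hw _), rfl⟩)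
  · rcases (lt_add_one_iff.1 (mem_Iio.1 hy)).eq_or_lt with rfl | hy
    · rw [hFtop]
      exact hδS
    obtain ⟨n, z, hz, rfl⟩ := hA.exists_eq_add_of_lt hγ hy
    exact hF hz ▸ hgS n hz

theorem isClosedCopyTop_of_forall_lt (hA : IsBlockStarts A η) (hγ : IsLUB (range A) γ)
    (hδ : δ.cof = ℵ₀) (hδS : δ ∈ S)
    (blocks : ∀ n, ∀ ξ < δ, ∃ f, IsNormalOn f (η n + 1) ∧
      MapsTo f (Iio (η n + 1)) (S ∩ Ioi ξ) ∧ f (η n) < δ) :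
    IsClosedCopyTop γ S δ := by
  obtain ⟨ε, hεδ, hε⟩ := exists_seq_of_cof_eq_aleph0 hδ
  choose! G hG hGS hGδ using blocks
  -- block `n` is placed above `q n`, which lies above `ε n` and above the top of block `n - 1`
  let q : ℕ → Ordinal.{u} := fun n => Nat.rec (ε 0) (fun n x => max (G n x (η n)) (ε (n + 1))) n
  have hq : ∀ n, q (n + 1) = max (G n (q n) (η n)) (ε (n + 1)) := fun n => rfl
  have hqδ : ∀ n, q n < δ := by
    intro n
    induction n with
    | zero => exact hεδ 0
    | succ n ih => exact hq n ▸ max_lt (hGδ n _ ih) (hεδ _)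
  have hεq : ∀ n, ε n ≤ q n := fun n => by
    cases n with
    | zero => exact le_rfl
    | succ n => exact hq n ▸ le_max_right _ _
  have hqG : ∀ n, q n < G n (q n) (η n) := fun n => (hGS n _ (hqδ n) (mem_Iio.2 (lt_add_one _))).2
  refine hA.isClosedCopyTop_blockConcat (g := fun n => G n (q n)) hγ
    (fun n => hG n _ (hqδ n)) (fun n => (hGS n _ (hqδ n)).mono_right inter_subset_left)
    (fun n z hz => (hq n ▸ le_max_left _ _ : G n (q n) (η n) ≤ q (n + 1)).trans_lt
      (hGS (n + 1) _ (hqδ (n + 1)) hz).2)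
    ⟨?_, fun u hu => not_lt.1 fun hu' => ?_⟩ hδS
  · rintro _ ⟨n, rfl⟩
    exact (hGδ n _ (hqδ n)).le
  · obtain ⟨n, hn⟩ := hε u hu'
    exact (hu ⟨n, rfl⟩).not_gt (hn.trans_lt ((hεq n).trans_lt (hqG n)))

end IsBlockStarts

theorem exists_isBlockStarts {γ : Ordinal.{u}} (hγ : IsSuccLimit γ) (hγ₁ : γ.cof = ℵ₀) :
    ∃ A η : ℕ → Ordinal.{u}, IsBlockStarts A η ∧ IsLUB (range A) γ := by
  obtain ⟨b, hbγ, hb⟩ := exists_seq_of_cof_eq_aleph0 hγ₁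
  let A : ℕ → Ordinal.{u} := fun n => Nat.rec 0 (fun n a => max a (b n) + 1) n
  have hA : ∀ n, A (n + 1) = max (A n) (b n) + 1 := fun n => rfl
  have hAγ : ∀ n, A n < γ := by
    intro n
    induction n with
    | zero => exact hγ.bot_lt
    | succ n ih => exact hA n ▸ hγ.add_one_lt (max_lt ih (hbγ n))
  refine ⟨A, fun n => max (A n) (b n) - A n, ⟨rfl, fun n => ?_⟩,
    ⟨?_, fun u hu => not_lt.1 fun hu' => ?_⟩⟩
  · rw [← add_assoc, Ordinal.add_sub_cancel_of_le (le_max_left _ _), hA]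
  · rintro _ ⟨n, rfl⟩
    exact (hAγ n).le
  · obtain ⟨n, hn⟩ := hb u hu'
    exact (hu ⟨n + 1, rfl⟩).not_gt (hn.trans_lt (hA n ▸ (le_max_right _ _).trans_lt (lt_add_one _)))

end BlockConcat

section Friedman

variable {c : Cardinal.{0}}

theorem stationaryIn_isClosedCopyTop_of_isSuccLimit (hc : c.IsRegular) (hc₁ : ℵ₀ < c)
    {γ : Ordinal.{0}} (hγ : IsSuccLimit γ) (hγ₁ : γ < ω₁) {S : Set Ordinal.{0}}
    (hS : StationaryIn S c.ord) (hSω : ∀ x ∈ S, x.cof = ℵ₀)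
    (IH : ∀ η < γ, ∀ S' : Set Ordinal.{0}, StationaryIn S' c.ord → (∀ x ∈ S', x.cof = ℵ₀) →
      StationaryIn {δ | IsClosedCopyTop η S' δ} c.ord) :
    StationaryIn {δ | IsClosedCopyTop γ S δ} c.ord := by
  obtain ⟨A, η, hA, hAγ⟩ := exists_isBlockStarts hγ (cof_eq_aleph0_of_isSuccLimit hγ hγ₁)
  have hηγ : ∀ n, η n < γ := fun n => (lt_add_one (η n)).trans_le
    (le_add_self.trans ((hA.add_add_one n).trans_le (hAγ.1 ⟨n + 1, rfl⟩)))
  have hblock : ∀ n, ∀ ξ < c.ord, ∃ f, IsNormalOn f (η n + 1) ∧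
      MapsTo f (Iio (η n + 1)) (S ∩ Ioi ξ) ∧ f (η n) < c.ord := by
    intro n ξ hξ
    obtain ⟨_, ⟨f, hf, hfS, rfl⟩, hδ⟩ := (IH (η n) (hηγ n) _
      (hS.inter hc hc₁ (isClubIn_Ioo hc hξ)) fun x hx => hSω x hx.1).exists_lt hc
    exact ⟨f, hf, fun y hy => ⟨(hfS hy).1, (hfS hy).2.1⟩, hδ⟩
  choose! G hG hGS hGl using hblock
  have hF : MapsTo (fun ξ => ⨆ n, G n ξ (η n)) (Iio c.ord) (Iio c.ord) := fun ξ hξ =>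
    Ordinal.iSup_lt_of_lt_cof (by rwa [hc.cof_ord, Cardinal.mk_nat]) fun n => hGl n ξ hξ
  intro C hC
  obtain ⟨δ, ⟨hδS, hδl, hδF⟩, hδC⟩ := hS.inter hc hc₁ (isClubIn_closurePoints hc hc₁ hF) C hC
  refine ⟨δ, hA.isClosedCopyTop_of_forall_lt hAγ (hSω δ hδS) hδS fun n ξ hξ => ?_, hδC⟩
  exact ⟨G n ξ, hG n ξ (hξ.trans hδl), hGS n ξ (hξ.trans hδl),
    (Ordinal.le_iSup (fun m => G m ξ (η m)) n).trans_lt (hδF ξ hξ)⟩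

theorem stationaryIn_isClosedCopyTop (hc : c.IsRegular) (hc₁ : ℵ₀ < c) {γ : Ordinal.{0}}
    (hγ : γ < ω₁) {S : Set Ordinal.{0}} (hS : StationaryIn S c.ord) (hSω : ∀ x ∈ S, x.cof = ℵ₀) :
    StationaryIn {δ | IsClosedCopyTop γ S δ} c.ord := by
  induction γ using WellFoundedLT.induction generalizing S with | _ γ IH => ?_
  rcases zero_or_succ_or_isSuccLimit γ with rfl | ⟨β, rfl⟩ | hlim
  · exact fun C hC => (hS C hC).mono fun δ hδ => ⟨isClosedCopyTop_zero hδ.1, hδ.2⟩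
  · rw [Order.succ_eq_add_one] at hγ IH ⊢
    obtain ⟨δ₀, hδ₀, hδ₀l⟩ :=
      (IH β (lt_add_one β) ((lt_add_one β).trans hγ) hS hSω).exists_lt hc
    intro C hC
    obtain ⟨δ, ⟨hδS, hδ₀δ, -⟩, hδC⟩ := hS.inter hc hc₁ (isClubIn_Ioo hc hδ₀l) C hC
    exact ⟨δ, hδ₀.add_one hδ₀δ hδS, hδC⟩
  · exact stationaryIn_isClosedCopyTop_of_isSuccLimit hc hc₁ hlim hγ hS hSω
      fun η hη S' hS' hS'ω => IH η hη (hη.trans hγ) hS' hS'ω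

end Friedman

theorem topPHFam_ord_of_isRegular {c : Cardinal.{0}} (hc : c.IsRegular) (hc₁ : ℵ₀ < c)
    {ι : Type} (hι : #ι < c) {r : ι} {α : ι → Ordinal.{0}} (hr : α r = ω₁)
    (hα : ∀ i, i ≠ r → α i < ω₁) : TopPHFam c.ord α := by
  intro col
  by_cases hS : StationaryIn (Iio c.ord ∩ {x | x.cof = ℵ₀ ∧ col x ≠ r}) c.ord
  · obtain ⟨i, hi⟩ := hS.exists_inter_preimage hc hc₁ hι col
    obtain ⟨x, ⟨⟨-, -, hxr⟩, rfl⟩, -⟩ := hi.exists_lt hc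
    obtain ⟨δ, ⟨f, hf, hfS, -⟩, -⟩ :=
      (stationaryIn_isClosedCopyTop hc hc₁ (hα _ hxr) hi fun x hx => hx.1.2.1).exists_lt hc
    refine ⟨col x, (hf.mono (lt_add_one _).le).homeoCopy fun y hy => ?_⟩
    obtain ⟨⟨hyl, -⟩, hyc⟩ := hfS (mem_Iio.2 ((mem_Iio.1 hy).trans (lt_add_one _)))
    exact ⟨hyl, hyc⟩
  · simp only [StationaryIn, not_forall, not_nonempty_iff_eq_empty] at hS
    obtain ⟨C, hC, hSC⟩ := hS
    refine ⟨r, hr ▸ (hC.homeoCopy_omega1 hc hc₁).mono fun x ⟨hxC, hx⟩ => ⟨hC.1 hxC, ?_⟩⟩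
    by_contra hxr
    exact hSC.subset ⟨⟨hC.1 hxC, hx, hxr⟩, hxC⟩

theorem le_of_topPHFam {ι : Type} {r : ι} {α : ι → Ordinal.{0}} (hr : α r = ω₁)
    (hα : ∀ i, 2 ≤ α i) {β : Ordinal.{0}} (h : TopPHFam β α) :
    max ω₁ (succ #ι).ord ≤ β := by
  refine max_le ?_ (not_lt.1 fun hβ => ?_)
  · obtain ⟨i, hi⟩ := h fun _ => r
    obtain ⟨x, ⟨-, rfl⟩, -⟩ := hi.nontrivial (hα i)
    have hcard := (hr ▸ hi.card_le).trans
      ((Cardinal.mk_le_mk_of_subset inter_subset_left).trans_eq (Cardinal.mk_Iio_ordinal β))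
    rw [Cardinal.lift_le, card_omega] at hcard
    exact Cardinal.ord_aleph 1 ▸ Cardinal.ord_le.2 hcard
  · have hj : Cardinal.lift.{0} #(Iio β) ≤ Cardinal.lift.{1} #ι := by
      rw [Cardinal.mk_Iio_ordinal, Cardinal.lift_lift, Cardinal.lift_le]
      exact Order.lt_succ_iff.1 (Cardinal.lt_ord.1 hβ)
    obtain ⟨j⟩ := Cardinal.lift_mk_le'.1 hj
    obtain ⟨i, hi⟩ := h fun x => if hx : x < β then j ⟨x, hx⟩ else r
    obtain ⟨x, ⟨hxβ, hx⟩, y, ⟨hyβ, hy⟩, hxy⟩ := hi.nontrivial (hα i)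
    simp only [mem_preimage, mem_singleton_iff, dif_pos (mem_Iio.1 hxβ),
      dif_pos (mem_Iio.1 hyβ)] at hx hy
    exact hxy (congrArg Subtype.val (j.injective (hx.trans hy.symm)))

/-- If `α_r = ω₁` and `2 ≤ αᵢ < ω₁` for `i ≠ r`, then `P^top(αᵢ)_{i∈κ} = max{ω₁, κ⁺}`;
in particular, for infinite `κ`, any `κ`-colouring of `κ⁺` has a copy of `ω₁` in colour `r`
or a copy of `αᵢ` in some colour `i ≠ r`. -/
theorem topPH_one_omega1 {ι : Type} (r : ι) (α : ι → Ordinal.{0}) (hr : α r = ω₁)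
    (ho : ∀ i, i ≠ r → 2 ≤ α i ∧ α i < ω₁) :
    IsLeast {β : Ordinal.{0} | TopPHFam β α} (max ω₁ (Order.succ (Cardinal.mk ι)).ord) ∧
      (ℵ₀ ≤ Cardinal.mk ι → ∀ c : Ordinal.{0} → ι,
        HomeoCopy ω₁ (Iio (Order.succ (Cardinal.mk ι)).ord ∩ c ⁻¹' {r}) ∨
        ∃ i, i ≠ r ∧
          HomeoCopy (α i) (Iio (Order.succ (Cardinal.mk ι)).ord ∩ c ⁻¹' {i})) := by
  have hreg : (max ℵ₁ (succ #ι)).IsRegular := by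
    rcases le_total ℵ₁ (succ #ι) with h | h
    · rw [max_eq_right h]
      exact Cardinal.isRegular_succ (Order.lt_succ_iff.1 (Cardinal.aleph_one_le_iff.1 h))
    · rw [max_eq_left h]
      exact Cardinal.isRegular_aleph_one
  have hmem : TopPHFam (max ω₁ (succ #ι).ord) α := by
    rw [← Cardinal.ord_aleph 1, ← Cardinal.ord_mono.map_max]
    exact topPHFam_ord_of_isRegular hreg (Cardinal.aleph_one_le_iff.1 le_sup_left)
      ((Order.lt_succ _).trans_le le_sup_right) hr fun i hi => (ho i hi).2
  have hα : ∀ i, 2 ≤ α i := fun i => by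
    by_cases hi : i = r
    · exact hi ▸ hr ▸ (natCast_lt_omega0 2).le.trans omega0_lt_omega_one.le
    · exact (ho i hi).1
  refine ⟨⟨hmem, fun β hβ => le_of_topPHFam hr hα hβ⟩, fun hκ c => ?_⟩
  rw [max_eq_right (Cardinal.ord_aleph 1 ▸ Cardinal.succ_aleph0 ▸
    Cardinal.ord_le_ord.2 (Order.succ_le_succ hκ))] at hmem
  obtain ⟨i, hi⟩ := hmem c
  by_cases hir : i = r
  · rw [hir, hr] at hi
    exact .inl hi
  · exact .inr ⟨i, hir, hi⟩

end
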